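/- arXiv:1606.01850 — 2 statements merged into one kernel-verified Lean document; each statement's English description precedes it below -/
import Mathlib

section
/- For X, Y ∈ L^2_R with z = P_R(X), ξ = P_R(Y), the geodesic distance satisfies R * acosh(-(X ⊙ Y)/R^2) = 2R * asinh( R |z - ξ| / sqrt((R^2 - |z|^2)(R^2 - |ξ|^2)) ). -/
def lor (X Y : ℝ × ℝ × ℝ) : ℝ := X.1 * Y.1 + X.2.1 * Y.2.1 - X.2.2 * Y.2.2

noncomputable def arcosh (x : ℝ) : ℝ := Real.log (x + Real.sqrt (x ^ 2 - 1))

noncomputable def stereo (R : ℝ) (X : ℝ × ℝ × ℝ) : ℂ :=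
  (R * X.1 + R * X.2.1 * Complex.I) / (R + X.2.2)

/-!
Both sides are functions of the Lorentzian product `t = -(X ⊙ Y) / R²`. Clearing denominators in
the stereographic projection gives `R² - |z|² = 2R³ / (R + x₃)` and
`|z - ξ|² = 2R² (-(X ⊙ Y) - R²) / ((R + x₃)(R + y₃))`, so the argument `s` of `arsinh` satisfies
`t = 1 + 2 s²`; the half-angle identity `cosh (2u) = 1 + 2 sinh² u` then turns `acosh t` into
`2 asinh s`.
-/

lemma arcosh_eq_real_arcosh : arcosh = Real.arcosh := rfl

lemma Real.arcosh_one_add_two_mul_sq {s : ℝ} (hs : 0 ≤ s) :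
    Real.arcosh (1 + 2 * s ^ 2) = 2 * arsinh s := by
  have hcosh : cosh (2 * arsinh s) = 1 + 2 * s ^ 2 := by
    rw [cosh_two_mul, cosh_sq, sinh_arsinh]; ring
  rw [← hcosh, arcosh_cosh (by positivity [arsinh_nonneg_iff.2 hs])]

section Stereo

variable {R : ℝ} {X Y : ℝ × ℝ × ℝ}

lemma stereo_re : (stereo R X).re = R * X.1 / (R + X.2.2) := by
  rw [stereo, ← Complex.ofReal_add, Complex.div_ofReal_re]; simp

lemma stereo_im : (stereo R X).im = R * X.2.1 / (R + X.2.2) := by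
  rw [stereo, ← Complex.ofReal_add, Complex.div_ofReal_im]; simp

lemma sq_sub_sq_norm_stereo (hX : lor X X = -R ^ 2) (hRX : R + X.2.2 ≠ 0) :
    R ^ 2 - ‖stereo R X‖ ^ 2 = 2 * R ^ 3 / (R + X.2.2) := by
  rw [Complex.sq_norm, Complex.normSq_apply, stereo_re, stereo_im]
  unfold lor at hX
  field_simp
  linear_combination -R ^ 2 * hX

lemma sq_norm_stereo_sub (hX : lor X X = -R ^ 2) (hY : lor Y Y = -R ^ 2)
    (hRX : R + X.2.2 ≠ 0) (hRY : R + Y.2.2 ≠ 0) :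
    ‖stereo R X - stereo R Y‖ ^ 2 =
      2 * R ^ 2 * (-lor X Y - R ^ 2) / ((R + X.2.2) * (R + Y.2.2)) := by
  rw [Complex.sq_norm, Complex.normSq_apply, Complex.sub_re, Complex.sub_im, stereo_re, stereo_re,
    stereo_im, stereo_im]
  unfold lor at hX hY ⊢
  field_simp
  linear_combination R ^ 2 * ((R + Y.2.2) ^ 2 * hX + (R + X.2.2) ^ 2 * hY)

end Stereo

theorem geodesic_eq_disk_formula (R : ℝ) (hR : 0 < R) (X Y : ℝ × ℝ × ℝ)
    (hX : lor X X = -R ^ 2) (hX3 : 0 < X.2.2)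
    (hY : lor Y Y = -R ^ 2) (hY3 : 0 < Y.2.2) :
    R * arcosh (-(lor X Y) / R ^ 2) =
      2 * R * Real.arsinh (R * ‖stereo R X - stereo R Y‖ /
        Real.sqrt ((R ^ 2 - ‖stereo R X‖ ^ 2) *
          (R ^ 2 - ‖stereo R Y‖ ^ 2))) := by
  have hDX : 0 < R + X.2.2 := by positivity
  have hDY : 0 < R + Y.2.2 := by positivity
  have hdiskX := sq_sub_sq_norm_stereo hX hDX.ne'
  have hdiskY := sq_sub_sq_norm_stereo hY hDY.ne'
  set s := R * ‖stereo R X - stereo R Y‖ /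
    Real.sqrt ((R ^ 2 - ‖stereo R X‖ ^ 2) * (R ^ 2 - ‖stereo R Y‖ ^ 2))
  have hs : -lor X Y / R ^ 2 = 1 + 2 * s ^ 2 := by
    rw [div_pow, mul_pow, Real.sq_sqrt (by rw [hdiskX, hdiskY]; positivity),
      sq_norm_stereo_sub hX hY hDX.ne' hDY.ne', hdiskX, hdiskY]
    field_simp
    ring
  rw [hs, arcosh_eq_real_arcosh, Real.arcosh_one_add_two_mul_sq (by positivity)]
  ring
end

section
/- The stereographic projection P_R from the hyperboloid L^2_R is conformal: for a differentiable curve Q(t) in L^2_R with projection q(t) = P_R(Q(t)), Q'(t) ⊙ Q'(t) = 4R^4 |q'(t)|^2 / (R^2 - |q(t)|^2)^2. -/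
theorem stereo_conformal (R : ℝ) (hR : 0 < R) (Q : ℝ → ℝ × ℝ × ℝ)
    (hQ : ∀ t, lor (Q t) (Q t) = -R ^ 2 ∧ 0 < (Q t).2.2)
    (t : ℝ) (hdiff : DifferentiableAt ℝ Q t) :
    lor (deriv Q t) (deriv Q t) =
      4 * R ^ 4 * ‖deriv (fun s => stereo R (Q s)) t‖ ^ 2 /
        (R ^ 2 - ‖stereo R (Q t)‖ ^ 2) ^ 2 := by
  have hQd := hdiff.hasDerivAt
  set a := (deriv Q t).1 with ha
  set b := (deriv Q t).2.1 with hb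
  set c := (deriv Q t).2.2 with hc
  have hx : HasDerivAt (fun s => (Q s).1) a t := by
    simpa using hQd.hasFDerivAt.fst.hasDerivAt
  have hy : HasDerivAt (fun s => (Q s).2.1) b t := by
    simpa using hQd.hasFDerivAt.snd.fst.hasDerivAt
  have hz : HasDerivAt (fun s => (Q s).2.2) c t := by
    simpa using hQd.hasFDerivAt.snd.snd.hasDerivAt
  set x := (Q t).1 with hxv
  set y := (Q t).2.1 with hyv
  set z := (Q t).2.2 with hzv
  have hz0 : 0 < z := (hQ t).2
  have hden : (0:ℝ) < R + z := by linarith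
  have hden' : (R:ℝ) + z ≠ 0 := ne_of_gt hden
  have hdenC : ((R:ℂ) + (z:ℂ)) ≠ 0 := by
    simpa using Complex.ofReal_ne_zero.mpr hden'
  have hcon : x * x + y * y - z * z = -R ^ 2 := (hQ t).1
  -- tangency
  have htanD : HasDerivAt (fun s => lor (Q s) (Q s))
      (a * x + x * a + (b * y + y * b) - (c * z + z * c)) t := by
    simpa [lor, Pi.mul_def, Pi.add_def, Pi.sub_def] using ((hx.mul hx).add (hy.mul hy)).sub (hz.mul hz)
  have htan0 : HasDerivAt (fun s => lor (Q s) (Q s)) 0 t := by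
    have : (fun s => lor (Q s) (Q s)) = fun _ => -R ^ 2 := funext fun s => (hQ s).1
    rw [this]; exact hasDerivAt_const _ _
  have htan : x * a + y * b - z * c = 0 := by
    have := htanD.unique htan0
    linarith [this]
  -- derivative of the projection
  have hnum : HasDerivAt (fun s => (R:ℂ) * ((Q s).1:ℂ) + (R:ℂ) * ((Q s).2.1:ℂ) * Complex.I)
      ((R:ℂ) * (a:ℂ) + (R:ℂ) * (b:ℂ) * Complex.I) t :=
    (hx.ofReal_comp.const_mul _).add ((hy.ofReal_comp.const_mul _).mul_const _)
  have hdenD : HasDerivAt (fun s => (R:ℂ) + ((Q s).2.2:ℂ)) (c:ℂ) t :=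
    hz.ofReal_comp.const_add _
  have hq : HasDerivAt (fun s => stereo R (Q s))
      ((((R:ℂ) * a + (R:ℂ) * b * Complex.I) * ((R:ℂ) + z) -
        ((R:ℂ) * x + (R:ℂ) * y * Complex.I) * c) / ((R:ℂ) + z) ^ 2) t := by
    simpa [stereo, Pi.div_def] using hnum.div hdenD hdenC
  rw [hq.deriv]
  -- values as real pairs
  have hv : (((R:ℂ) * a + (R:ℂ) * b * Complex.I) * ((R:ℂ) + z) -
        ((R:ℂ) * x + (R:ℂ) * y * Complex.I) * c) / ((R:ℂ) + z) ^ 2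
      = ((R * (a * (R + z) - x * c) / (R + z) ^ 2 : ℝ) : ℂ) +
        ((R * (b * (R + z) - y * c) / (R + z) ^ 2 : ℝ) : ℂ) * Complex.I := by
    push_cast
    field_simp
    ring
  have hw : stereo R (Q t)
      = ((R * x / (R + z) : ℝ) : ℂ) + ((R * y / (R + z) : ℝ) : ℂ) * Complex.I := by
    rw [stereo]
    simp only [← hxv, ← hyv, ← hzv]
    push_cast
    field_simp
  rw [hv, hw]
  have habs1 : ‖(((R * (a * (R + z) - x * c) / (R + z) ^ 2 : ℝ) : ℂ) +
        ((R * (b * (R + z) - y * c) / (R + z) ^ 2 : ℝ) : ℂ) * Complex.I)‖ ^ 2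
      = (R * (a * (R + z) - x * c) / (R + z) ^ 2) ^ 2 +
        (R * (b * (R + z) - y * c) / (R + z) ^ 2) ^ 2 := by
    rw [← Complex.normSq_eq_norm_sq, Complex.normSq_add_mul_I]
  have habs2 : ‖(((R * x / (R + z) : ℝ) : ℂ) +
        ((R * y / (R + z) : ℝ) : ℂ) * Complex.I)‖ ^ 2
      = (R * x / (R + z)) ^ 2 + (R * y / (R + z)) ^ 2 := by
    rw [← Complex.normSq_eq_norm_sq, Complex.normSq_add_mul_I]
  rw [habs1, habs2]
  have hlor : lor (deriv Q t) (deriv Q t) = a * a + b * b - c * c := rfl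
  rw [hlor]
  -- the base denominator
  have hbase : R ^ 2 - ((R * x / (R + z)) ^ 2 + (R * y / (R + z)) ^ 2)
      = 2 * R ^ 3 / (R + z) := by
    field_simp
    linear_combination (-1) * hcon
  rw [hbase]
  have key : (a * a + b * b - c * c) * (R + z) ^ 2
      = (a * (R + z) - x * c) ^ 2 + (b * (R + z) - y * c) ^ 2 := by
    linear_combination (-(c^2)) * hcon + 2 * (R + z) * c * htan
  have hR' : (R:ℝ) ≠ 0 := ne_of_gt hR
  have hrhs : 4 * R ^ 4 * ((R * (a * (R + z) - x * c) / (R + z) ^ 2) ^ 2 +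
      (R * (b * (R + z) - y * c) / (R + z) ^ 2) ^ 2) / (2 * R ^ 3 / (R + z)) ^ 2
      = ((a * (R + z) - x * c) ^ 2 + (b * (R + z) - y * c) ^ 2) / (R + z) ^ 2 := by
    field_simp
    ring
  rw [hrhs, eq_div_iff (pow_ne_zero 2 hden')]
  exact key
end
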